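/- Average-iterate convergence of PDHG: let {z^k} be the PDHG iterates for the saddle-point formulation of a standard-form LP with step size 0 < s ≤ 1/‖A‖₂, started at z⁰ ∈ Z, and let z̄^k = (x̄^k, ȳ^k) = (1/k)·Σ_{i=1}^k z^i. Then for every z = (x,y) ∈ Z and every k ≥ 1, L(x̄^k, y) − L(x, ȳ^k) ≤ (1/(2k))·‖z − z⁰‖²_{P_s}. -/

import Mathlib

open Matrix Filter

/-- Euclidean norm of a vector in `ℝ^d`. -/
noncomputable def enorm {d : ℕ} (x : Fin d → ℝ) : ℝ := Real.sqrt (x ⬝ᵥ x)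

/-- Spectral norm (ℓ₂ operator norm) of a matrix. -/
noncomputable def specNorm {m n : ℕ} (A : Matrix (Fin m) (Fin n) ℝ) : ℝ :=
  sSup {t | ∃ x : Fin n → ℝ, x ⬝ᵥ x ≤ 1 ∧ t = _root_.enorm (A.mulVec x)}

/-- Componentwise positive part (projection onto the nonnegative orthant). -/
def projPos {d : ℕ} (x : Fin d → ℝ) : Fin d → ℝ := fun i => max (x i) 0

/-- One PDHG iteration with equal primal/dual step size `s`. -/
noncomputable def pdhgT {m n : ℕ} (A : Matrix (Fin m) (Fin n) ℝ) (b : Fin m → ℝ)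
    (c : Fin n → ℝ) (s : ℝ) (z : (Fin n → ℝ) × (Fin m → ℝ)) : (Fin n → ℝ) × (Fin m → ℝ) :=
  let x' := projPos (z.1 + s • Aᵀ.mulVec z.2 - s • c)
  (x', z.2 - s • A.mulVec ((2 : ℝ) • x' - z.1) + s • b)

/-- The Lagrangian `L(x,y) = cᵀx - yᵀAx + bᵀy`. -/
noncomputable def lagr {m n : ℕ} (A : Matrix (Fin m) (Fin n) ℝ) (b : Fin m → ℝ)
    (c : Fin n → ℝ) (x : Fin n → ℝ) (y : Fin m → ℝ) : ℝ :=
  c ⬝ᵥ x - y ⬝ᵥ A.mulVec x + b ⬝ᵥ y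

/-- Membership in `Z = ℝ₊ⁿ × ℝᵐ`. -/
def inZ {m n : ℕ} (z : (Fin n → ℝ) × (Fin m → ℝ)) : Prop := ∀ i, 0 ≤ z.1 i

/-- Saddle point of `L` over `Z`. -/
def isSaddle {m n : ℕ} (A : Matrix (Fin m) (Fin n) ℝ) (b : Fin m → ℝ) (c : Fin n → ℝ)
    (z : (Fin n → ℝ) × (Fin m → ℝ)) : Prop :=
  inZ z ∧ ∀ w : (Fin n → ℝ) × (Fin m → ℝ), inZ w →
    lagr A b c z.1 w.2 ≤ lagr A b c z.1 z.2 ∧ lagr A b c z.1 z.2 ≤ lagr A b c w.1 z.2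

/-- The quadratic form `‖z‖²_{P_s}` induced by `P_s = [[(1/s)I, Aᵀ],[A,(1/s)I]]`. -/
noncomputable def PsSq {m n : ℕ} (A : Matrix (Fin m) (Fin n) ℝ) (s : ℝ)
    (z : (Fin n → ℝ) × (Fin m → ℝ)) : ℝ :=
  (1 / s) * (z.1 ⬝ᵥ z.1 + z.2 ⬝ᵥ z.2) + 2 * (A.mulVec z.1 ⬝ᵥ z.2)

/-- The `P_s` norm. -/
noncomputable def PsNorm {m n : ℕ} (A : Matrix (Fin m) (Fin n) ℝ) (s : ℝ)
    (z : (Fin n → ℝ) × (Fin m → ℝ)) : ℝ := Real.sqrt (PsSq A s z)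

/-- Euclidean norm on the primal-dual pair space. -/
noncomputable def enormP {m n : ℕ} (z : (Fin n → ℝ) × (Fin m → ℝ)) : ℝ :=
  Real.sqrt (z.1 ⬝ᵥ z.1 + z.2 ⬝ᵥ z.2)

/-- Normalized duality gap `ρ_r(z)`. -/
noncomputable def rho {m n : ℕ} (A : Matrix (Fin m) (Fin n) ℝ) (b : Fin m → ℝ)
    (c : Fin n → ℝ) (r : ℝ) (z : (Fin n → ℝ) × (Fin m → ℝ)) : ℝ :=
  (1 / r) * sSup {g | ∃ w : (Fin n → ℝ) × (Fin m → ℝ), inZ w ∧ enormP (w - z) ≤ r ∧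
    g = lagr A b c z.1 w.2 - lagr A b c w.1 z.2}

/-- Euclidean distance to the saddle-point set `Z*`. -/
noncomputable def dist2 {m n : ℕ} (A : Matrix (Fin m) (Fin n) ℝ) (b : Fin m → ℝ)
    (c : Fin n → ℝ) (z : (Fin n → ℝ) × (Fin m → ℝ)) : ℝ :=
  sInf {d | ∃ w, isSaddle A b c w ∧ d = enormP (z - w)}

/-- `P_s`-distance to the saddle-point set `Z*`. -/
noncomputable def distPs {m n : ℕ} (A : Matrix (Fin m) (Fin n) ℝ) (b : Fin m → ℝ)
    (c : Fin n → ℝ) (s : ℝ) (z : (Fin n → ℝ) × (Fin m → ℝ)) : ℝ :=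
  sInf {d | ∃ w, isSaddle A b c w ∧ d = PsNorm A s (z - w)}

/-- `v` is the infimal displacement vector of `T`: the minimum-`P_s`-norm element
of the closure of `range (T - I)`. -/
def isIDV {m n : ℕ} (A : Matrix (Fin m) (Fin n) ℝ) (s : ℝ)
    (T : (Fin n → ℝ) × (Fin m → ℝ) → (Fin n → ℝ) × (Fin m → ℝ))
    (v : (Fin n → ℝ) × (Fin m → ℝ)) : Prop :=
  v ∈ closure {w | ∃ z, w = T z - z} ∧
  ∀ w ∈ closure {w | ∃ z, w = T z - z}, PsNorm A s v ≤ PsNorm A s w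


section PDHGaux

lemma dot_self_nonneg' {d : ℕ} (x : Fin d → ℝ) : 0 ≤ x ⬝ᵥ x :=
  Finset.sum_nonneg fun i _ => mul_self_nonneg (x i)

lemma enorm_nonneg' {d : ℕ} (x : Fin d → ℝ) : 0 ≤ _root_.enorm x := Real.sqrt_nonneg _

lemma enorm_sq {d : ℕ} (x : Fin d → ℝ) : _root_.enorm x ^ 2 = x ⬝ᵥ x := by
  rw [_root_.enorm, Real.sq_sqrt (dot_self_nonneg' x)]

lemma enorm_smul' {d : ℕ} (r : ℝ) (x : Fin d → ℝ) : _root_.enorm (r • x) = |r| * _root_.enorm x := by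
  rw [_root_.enorm, smul_dotProduct, dotProduct_smul, smul_eq_mul, smul_eq_mul, ← mul_assoc,
    Real.sqrt_mul (mul_self_nonneg r), _root_.enorm, Real.sqrt_mul_self_eq_abs r]

lemma dot_le_enorm {d : ℕ} (x y : Fin d → ℝ) : x ⬝ᵥ y ≤ _root_.enorm x * _root_.enorm y := by
  have h := Finset.sum_mul_sq_le_sq_mul_sq Finset.univ x y
  have h2 : (x ⬝ᵥ y) ^ 2 ≤ (x ⬝ᵥ x) * (y ⬝ᵥ y) := by
    simpa [dotProduct, pow_two, mul_assoc, mul_comm, mul_left_comm] using h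
  have hE : (_root_.enorm x * _root_.enorm y) ^ 2 = (x ⬝ᵥ x) * (y ⬝ᵥ y) := by
    rw [mul_pow, enorm_sq, enorm_sq]
  nlinarith [h2, hE, mul_nonneg (enorm_nonneg' x) (enorm_nonneg' y)]

lemma enorm_eq_zero_iff {d : ℕ} (x : Fin d → ℝ) : x ⬝ᵥ x = 0 → x = 0 := by
  intro h
  funext i
  have := Finset.sum_eq_zero_iff_of_nonneg (fun i _ => mul_self_nonneg (x i)) |>.mp h i
    (Finset.mem_univ i)
  simpa [mul_self_eq_zero] using this

lemma specNorm_bddAbove {m n : ℕ} (A : Matrix (Fin m) (Fin n) ℝ) :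
    BddAbove {t | ∃ x : Fin n → ℝ, x ⬝ᵥ x ≤ 1 ∧ t = _root_.enorm (A.mulVec x)} := by
  refine ⟨Real.sqrt (∑ i, ∑ j, A i j ^ 2), ?_⟩
  rintro t ⟨x, hx, rfl⟩
  rw [_root_.enorm]
  apply Real.sqrt_le_sqrt
  have key : ∀ i, (A.mulVec x i) * (A.mulVec x i) ≤ ∑ j, A i j ^ 2 := by
    intro i
    have h := Finset.sum_mul_sq_le_sq_mul_sq Finset.univ (A i) x
    have hx2 : ∑ j, x j ^ 2 ≤ 1 := by simpa [dotProduct, pow_two] using hx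
    have : (A.mulVec x i) ^ 2 ≤ (∑ j, A i j ^ 2) * ∑ j, x j ^ 2 := by
      simpa [Matrix.mulVec, dotProduct] using h
    nlinarith [Finset.sum_nonneg (fun j (_ : j ∈ Finset.univ) => sq_nonneg (A i j))]
  calc A.mulVec x ⬝ᵥ A.mulVec x = ∑ i, (A.mulVec x i) * (A.mulVec x i) := rfl
    _ ≤ ∑ i, ∑ j, A i j ^ 2 := Finset.sum_le_sum fun i _ => key i

lemma specNorm_nonneg {m n : ℕ} (A : Matrix (Fin m) (Fin n) ℝ) : 0 ≤ specNorm A := by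
  apply le_csSup (specNorm_bddAbove A)
  exact ⟨0, by simp [dot_self_nonneg'], by simp [_root_.enorm, Matrix.mulVec_zero]⟩

lemma enorm_mulVec_le {m n : ℕ} (A : Matrix (Fin m) (Fin n) ℝ) (x : Fin n → ℝ) :
    _root_.enorm (A.mulVec x) ≤ specNorm A * _root_.enorm x := by
  rcases eq_or_ne (_root_.enorm x) 0 with h | h
  · have hx : x = 0 := enorm_eq_zero_iff x (le_antisymm (by
      have := Real.sqrt_eq_zero'.mp h
      linarith [dot_self_nonneg' x]) (dot_self_nonneg' x))
    simp [hx, h, _root_.enorm, Matrix.mulVec_zero]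
  · have hpos : 0 < _root_.enorm x := lt_of_le_of_ne (enorm_nonneg' x) (Ne.symm h)
    have hmem : _root_.enorm (A.mulVec ((_root_.enorm x)⁻¹ • x)) ∈
        {t | ∃ x : Fin n → ℝ, x ⬝ᵥ x ≤ 1 ∧ t = _root_.enorm (A.mulVec x)} := by
      refine ⟨(_root_.enorm x)⁻¹ • x, ?_, rfl⟩
      have : ((_root_.enorm x)⁻¹ • x) ⬝ᵥ ((_root_.enorm x)⁻¹ • x) = (_root_.enorm x)⁻¹ ^ 2 * (x ⬝ᵥ x) := by
        rw [smul_dotProduct, dotProduct_smul]; ring_nf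
      rw [this, ← enorm_sq x]
      field_simp
      exact le_refl 1
    have hle := le_csSup (specNorm_bddAbove A) hmem
    have heq : _root_.enorm (A.mulVec ((_root_.enorm x)⁻¹ • x)) = (_root_.enorm x)⁻¹ * _root_.enorm (A.mulVec x) := by
      rw [Matrix.mulVec_smul, enorm_smul', abs_of_nonneg (by positivity)]
    rw [heq] at hle
    calc _root_.enorm (A.mulVec x) = _root_.enorm x * ((_root_.enorm x)⁻¹ * _root_.enorm (A.mulVec x)) := by field_simp
      _ ≤ _root_.enorm x * specNorm A := by apply mul_le_mul_of_nonneg_left hle hpos.le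
      _ = specNorm A * _root_.enorm x := mul_comm _ _

lemma psSq_nonneg {m n : ℕ} (A : Matrix (Fin m) (Fin n) ℝ) {s : ℝ} (hs : 0 < s)
    (hsA : s * specNorm A ≤ 1) (p : (Fin n → ℝ) × (Fin m → ℝ)) : 0 ≤ PsSq A s p := by
  have h1 : -(A.mulVec p.1 ⬝ᵥ p.2) ≤ _root_.enorm (A.mulVec p.1) * _root_.enorm p.2 := by
    have := dot_le_enorm (-(A.mulVec p.1)) p.2
    simpa [_root_.enorm, neg_dotProduct, dotProduct_neg] using this
  have h2 := enorm_mulVec_le A p.1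
  have e1 := enorm_sq p.1; have e2 := enorm_sq p.2
  have n1 := enorm_nonneg' p.1; have n2 := enorm_nonneg' p.2
  have hA := specNorm_nonneg A
  rw [PsSq]
  have key : specNorm A ≤ 1/s := by
    rw [le_div_iff₀ hs]; linarith [mul_comm s (specNorm A)]
  nlinarith [sq_nonneg (_root_.enorm p.1 - _root_.enorm p.2), mul_nonneg n1 n2,
    mul_le_mul_of_nonneg_right h2 n2]

/-- bilinear form associated to `PsSq` -/
noncomputable def Pf {m n : ℕ} (A : Matrix (Fin m) (Fin n) ℝ) (s : ℝ)
    (z w : (Fin n → ℝ) × (Fin m → ℝ)) : ℝ :=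
  (1 / s) * (z.1 ⬝ᵥ w.1 + z.2 ⬝ᵥ w.2) + (A.mulVec z.1 ⬝ᵥ w.2) + (A.mulVec w.1 ⬝ᵥ z.2)

lemma psSq_split {m n : ℕ} (A : Matrix (Fin m) (Fin n) ℝ) (s : ℝ)
    (w z z' : (Fin n → ℝ) × (Fin m → ℝ)) :
    PsSq A s (w - z) = PsSq A s (w - z') + PsSq A s (z' - z) + 2 * Pf A s (w - z') (z' - z) := by
  simp only [PsSq, Pf, Prod.fst_sub, Prod.snd_sub, Matrix.mulVec_sub,
    sub_dotProduct, dotProduct_sub]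
  rw [dotProduct_comm z.1 w.1, dotProduct_comm z'.1 w.1, dotProduct_comm z.1 z'.1,
    dotProduct_comm z.2 w.2, dotProduct_comm z'.2 w.2, dotProduct_comm z.2 z'.2]
  ring

lemma proj_ineq {d : ℕ} (v u : Fin d → ℝ) (hu : ∀ i, 0 ≤ u i) :
    0 ≤ (projPos v - v) ⬝ᵥ (u - projPos v) := by
  apply Finset.sum_nonneg
  intro i _
  simp only [Pi.sub_apply, projPos]
  rcases le_or_gt 0 (v i) with h | h
  · simp [max_eq_left h]
  · rw [max_eq_right h.le]
    have : 0 ≤ u i := hu i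
    nlinarith

lemma step_ineq {m n : ℕ} (A : Matrix (Fin m) (Fin n) ℝ) (b : Fin m → ℝ) (c : Fin n → ℝ)
    {s : ℝ} (hs : 0 < s) (z w : (Fin n → ℝ) × (Fin m → ℝ)) (hw : inZ w) :
    lagr A b c (pdhgT A b c s z).1 w.2 - lagr A b c w.1 (pdhgT A b c s z).2
      ≤ Pf A s (w - pdhgT A b c s z) (pdhgT A b c s z - z) := by
  obtain ⟨x, y⟩ := z
  obtain ⟨u, v⟩ := w
  set x' : Fin n → ℝ := projPos (x + s • Aᵀ.mulVec y - s • c) with hx'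
  set y' : Fin m → ℝ := y - s • A.mulVec ((2 : ℝ) • x' - x) + s • b with hy'
  have hT : pdhgT A b c s (x, y) = (x', y') := rfl
  rw [hT]
  have hproj := proj_ineq (x + s • Aᵀ.mulVec y - s • c) u hw
  rw [show projPos (x + s • Aᵀ.mulVec y - s • c) = x' from rfl] at hproj
  have r1 : ∀ (p : Fin n → ℝ) (q : Fin m → ℝ), A.mulVec p ⬝ᵥ q = p ⬝ᵥ (q ᵥ* A) := by
    intro p q
    rw [dotProduct_comm, Matrix.dotProduct_mulVec, dotProduct_comm]
  have r2 : ∀ (p : Fin n → ℝ) (q : Fin m → ℝ), q ⬝ᵥ A.mulVec p = p ⬝ᵥ (q ᵥ* A) := by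
    intro p q
    rw [Matrix.dotProduct_mulVec, dotProduct_comm]
  have r4 : ∀ (p p' : Fin n → ℝ), p ⬝ᵥ ((A.mulVec p') ᵥ* A) = p' ⬝ᵥ ((A.mulVec p) ᵥ* A) := by
    intro p p'
    rw [← r2 p (A.mulVec p'), dotProduct_comm, r2]
  have key : s * (lagr A b c x' v - lagr A b c u y')
        + ((x' - (x + s • Aᵀ.mulVec y - s • c)) ⬝ᵥ (u - x'))
      = s * Pf A s ((u, v) - (x', y')) ((x', y') - (x, y)) := by
    simp only [lagr, Pf, hy', Prod.fst_sub, Prod.snd_sub, Matrix.mulVec_add, Matrix.mulVec_sub,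
      Matrix.mulVec_smul, Matrix.mulVec_transpose, Matrix.add_vecMul, Matrix.sub_vecMul,
      Matrix.smul_vecMul, Matrix.neg_vecMul,
      sub_dotProduct, dotProduct_sub, add_dotProduct, dotProduct_add, smul_dotProduct,
      dotProduct_smul, smul_eq_mul, r1, r2,
      dotProduct_comm x' u, dotProduct_comm x u, dotProduct_comm c u, dotProduct_comm x x',
      dotProduct_comm c x', dotProduct_comm c x,
      dotProduct_comm b v, dotProduct_comm b y, dotProduct_comm y v,
      r4 x' u, r4 x u, r4 x x',
      dotProduct_comm ((A.mulVec x') ᵥ* A) u, dotProduct_comm ((A.mulVec x) ᵥ* A) u,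
      dotProduct_comm ((A.mulVec x) ᵥ* A) x', dotProduct_comm ((A.mulVec u) ᵥ* A) x,
      dotProduct_comm (y ᵥ* A) u, dotProduct_comm (y ᵥ* A) x', dotProduct_comm (y ᵥ* A) x,
      dotProduct_comm (v ᵥ* A) u, dotProduct_comm (v ᵥ* A) x', dotProduct_comm (v ᵥ* A) x,
      dotProduct_comm (b ᵥ* A) u, dotProduct_comm (b ᵥ* A) x', dotProduct_comm (b ᵥ* A) x]
    field_simp
    ring
  have hineq := add_le_add_right hproj (s * (lagr A b c x' v - lagr A b c u y'))
  rw [add_zero] at hineq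
  rw [key] at hineq
  have := le_of_mul_le_mul_left (by linarith :
    s * (lagr A b c x' v - lagr A b c u y')
      ≤ s * Pf A s ((u, v) - (x', y')) ((x', y') - (x, y))) hs
  linarith

lemma step_psSq {m n : ℕ} (A : Matrix (Fin m) (Fin n) ℝ) (b : Fin m → ℝ) (c : Fin n → ℝ)
    {s : ℝ} (hs : 0 < s) (hsA : s * specNorm A ≤ 1)
    (z w : (Fin n → ℝ) × (Fin m → ℝ)) (hw : inZ w) :
    lagr A b c (pdhgT A b c s z).1 w.2 - lagr A b c w.1 (pdhgT A b c s z).2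
      ≤ (1 / 2) * (PsSq A s (w - z) - PsSq A s (w - pdhgT A b c s z)) := by
  have h1 := step_ineq A b c hs z w hw
  have h2 := psSq_split A s w z (pdhgT A b c s z)
  have h3 := psSq_nonneg A hs hsA (pdhgT A b c s z - z)
  linarith

lemma sum_dot' {d : ℕ} (t : Finset ℕ) (f : ℕ → Fin d → ℝ) (v : Fin d → ℝ) :
    (∑ i ∈ t, f i) ⬝ᵥ v = ∑ i ∈ t, f i ⬝ᵥ v := by
  simp only [dotProduct, Finset.sum_apply, Finset.sum_mul]
  exact Finset.sum_comm

end PDHGaux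

/-- **Average-iterate convergence of PDHG** (Theorem 1):
for step size `0 < s ≤ 1/‖A‖₂`, for all `z = (x,y) ∈ Z` and `k ≥ 1`,
`L(x̄ᵏ, y) − L(x, ȳᵏ) ≤ (1/(2k))·‖z − z⁰‖²_{P_s}`. -/
theorem pdhg_average_iterate_convergence {m n : ℕ} (A : Matrix (Fin m) (Fin n) ℝ)
    (b : Fin m → ℝ) (c : Fin n → ℝ) (s : ℝ) (hs : 0 < s) (hsA : s * specNorm A ≤ 1)
    (z : ℕ → (Fin n → ℝ) × (Fin m → ℝ)) (hz0 : inZ (z 0))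
    (hz : ∀ k, z (k + 1) = pdhgT A b c s (z k)) :
    ∀ k : ℕ, 1 ≤ k → ∀ w : (Fin n → ℝ) × (Fin m → ℝ), inZ w →
      lagr A b c ((1 / (k : ℝ)) • ∑ i ∈ Finset.Icc 1 k, (z i).1) w.2
        - lagr A b c w.1 ((1 / (k : ℝ)) • ∑ i ∈ Finset.Icc 1 k, (z i).2)
        ≤ (1 / (2 * (k : ℝ))) * PsSq A s (w - z 0) := by
  intro k hk w hw
  have hkpos : (0 : ℝ) < (k : ℝ) := by exact_mod_cast hk
  -- telescoped sum inequality
  have tele : ∀ N : ℕ,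
      ∑ i ∈ Finset.Icc 1 N, (lagr A b c (z i).1 w.2 - lagr A b c w.1 (z i).2)
        ≤ (1 / 2) * (PsSq A s (w - z 0) - PsSq A s (w - z N)) := by
    intro N
    induction N with
    | zero => simp
    | succ N ih =>
      rw [Finset.sum_Icc_succ_top (Nat.one_le_iff_ne_zero.mpr (Nat.succ_ne_zero N))]
      have hstep := step_psSq A b c hs hsA (z N) w hw
      rw [← hz N] at hstep
      linarith
  have hsum := tele k
  have hnonneg := psSq_nonneg A hs hsA (w - z k)
  -- averaging identity
  have avg : lagr A b c ((1 / (k : ℝ)) • ∑ i ∈ Finset.Icc 1 k, (z i).1) w.2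
        - lagr A b c w.1 ((1 / (k : ℝ)) • ∑ i ∈ Finset.Icc 1 k, (z i).2)
      = (1 / (k : ℝ)) * ∑ i ∈ Finset.Icc 1 k,
          (lagr A b c (z i).1 w.2 - lagr A b c w.1 (z i).2) := by
    have hcard : (Finset.Icc 1 k).card = k := by simp
    simp only [lagr, dotProduct_smul, Matrix.mulVec_smul, smul_dotProduct, smul_eq_mul]
    have e1 : c ⬝ᵥ (∑ i ∈ Finset.Icc 1 k, (z i).1) = ∑ i ∈ Finset.Icc 1 k, c ⬝ᵥ (z i).1 := by
      rw [dotProduct_comm, sum_dot']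
      exact Finset.sum_congr rfl fun i _ => dotProduct_comm _ _
    have e2 : w.2 ⬝ᵥ A.mulVec (∑ i ∈ Finset.Icc 1 k, (z i).1)
        = ∑ i ∈ Finset.Icc 1 k, w.2 ⬝ᵥ A.mulVec ((z i).1) := by
      rw [show A.mulVec (∑ i ∈ Finset.Icc 1 k, (z i).1)
          = ∑ i ∈ Finset.Icc 1 k, A.mulVec ((z i).1) from
        map_sum A.mulVecLin _ _, dotProduct_comm, sum_dot']
      exact Finset.sum_congr rfl fun i _ => dotProduct_comm _ _
    have e3 : (∑ i ∈ Finset.Icc 1 k, (z i).2) ⬝ᵥ A.mulVec w.1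
        = ∑ i ∈ Finset.Icc 1 k, (z i).2 ⬝ᵥ A.mulVec w.1 := sum_dot' _ _ _
    have e4 : b ⬝ᵥ (∑ i ∈ Finset.Icc 1 k, (z i).2) = ∑ i ∈ Finset.Icc 1 k, b ⬝ᵥ (z i).2 := by
      rw [dotProduct_comm, sum_dot']
      exact Finset.sum_congr rfl fun i _ => dotProduct_comm _ _
    rw [e1, e2, e3, e4]
    simp only [Finset.sum_sub_distrib, Finset.sum_add_distrib, ← Finset.mul_sum,
      Finset.sum_const, hcard, nsmul_eq_mul]
    field_simp
  rw [avg]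
  calc (1 / (k : ℝ)) * ∑ i ∈ Finset.Icc 1 k,
          (lagr A b c (z i).1 w.2 - lagr A b c w.1 (z i).2)
      ≤ (1 / (k : ℝ)) * ((1 / 2) * (PsSq A s (w - z 0) - PsSq A s (w - z k))) := by
        apply mul_le_mul_of_nonneg_left hsum (by positivity)
    _ ≤ (1 / (2 * (k : ℝ))) * PsSq A s (w - z 0) := by
        have hid : (1 / (2 * (k : ℝ))) * PsSq A s (w - z 0)
              - (1 / (k : ℝ)) * ((1 / 2) * (PsSq A s (w - z 0) - PsSq A s (w - z k)))
            = (1 / (2 * (k : ℝ))) * PsSq A s (w - z k) := by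
          field_simp
          ring
        have hpos2 : (0 : ℝ) ≤ 1 / (2 * (k : ℝ)) := by positivity
        nlinarith [mul_nonneg hpos2 hnonneg]
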